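/- Bunkbed inequality for neighboring vertices with local symmetry: Let G = (V,E) be a finite complete graph with weights p_G ∈ [0,1)^E × [0,1]^V, and v, w ∈ V with p_{vw} > 0. Assume that either p_v = 1 or p_w = 1, or else for every u ∈ V with p_{uw} > 0 and p_u ≠ 1 there exists an automorphism φ of the weighted graph G with φ({v,w}) = {u,w}. Then P(v₋ ↔ w₋) ≥ P(v₋ ↔ w₊) for independent percolation on the bunkbed graph G±. -/

import Mathlib

open Finset

/-- The bunkbed graph of `G`: two copies of `G` (layers `false` = minus, `true` = plus)
plus vertical edges between the copies of each vertex. -/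
def bunkbed {V : Type*} (G : SimpleGraph V) : SimpleGraph (V × Bool) where
  Adj x y := (x.2 = y.2 ∧ G.Adj x.1 y.1) ∨ (x.1 = y.1 ∧ x.2 ≠ y.2)
  symm := ⟨by
    rintro ⟨u, s⟩ ⟨v, t⟩ (⟨h1, h2⟩ | ⟨h1, h2⟩)
    · exact Or.inl ⟨h1.symm, h2.symm⟩
    · exact Or.inr ⟨h1.symm, h2.symm⟩⟩
  loopless := ⟨by
    rintro ⟨u, s⟩ (⟨_, h⟩ | ⟨_, h⟩) <;> simp_all⟩

/-- The random subgraph of the bunkbed graph given by a percolation configuration `ω`. -/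
def openSub {V : Type*} (G : SimpleGraph V) (ω : Sym2 (V × Bool) → Bool) :
    SimpleGraph (V × Bool) where
  Adj x y := (bunkbed G).Adj x y ∧ ω s(x, y) = true
  symm := ⟨by
    intro x y h
    exact ⟨h.1.symm, by rw [Sym2.eq_swap]; exact h.2⟩⟩
  loopless := ⟨fun x h => (bunkbed G).irrefl h.1⟩

/-- `x` and `y` are connected by a path of open edges in configuration `ω`. -/
def Conn {V : Type*} (G : SimpleGraph V) (ω : Sym2 (V × Bool) → Bool) (x y : V × Bool) : Prop :=
  (openSub G ω).Reachable x y

/-- The probability weight of a configuration under independent bond percolation with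
edge probabilities `p`. -/
noncomputable def wt {V : Type*} [Fintype V] [DecidableEq V] (p : Sym2 (V × Bool) → ℝ)
    (ω : Sym2 (V × Bool) → Bool) : ℝ :=
  ∏ e : Sym2 (V × Bool), if ω e then p e else 1 - p e

open Classical in
/-- Probability of the event `A` under independent bond percolation with edge probabilities `p`. -/
noncomputable def prob {V : Type*} [Fintype V] [DecidableEq V] (p : Sym2 (V × Bool) → ℝ)
    (A : (Sym2 (V × Bool) → Bool) → Prop) : ℝ :=
  ∑ ω : Sym2 (V × Bool) → Bool, if A ω then wt p ω else 0

/-- Edge probabilities on the bunkbed graph built from horizontal weights `pE` (the same in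
both layers) and vertical weights `pV`. -/
noncomputable def edgeProb {V : Type*} [DecidableEq V] (pE : Sym2 V → ℝ) (pV : V → ℝ) :
    Sym2 (V × Bool) → ℝ :=
  Sym2.lift ⟨fun x y => if x.1 = y.1 then pV x.1 else if x.2 = y.2 then pE s(x.1, y.1) else 0, by
    intro x y
    beta_reduce
    by_cases h : x.1 = y.1
    · rw [if_pos h, if_pos h.symm, h]
    · have h' : y.1 ≠ x.1 := fun e => h e.symm
      rw [if_neg h, if_neg h']
      by_cases h2 : x.2 = y.2
      · rw [if_pos h2, if_pos h2.symm, Sym2.eq_swap]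
      · rw [if_neg h2, if_neg (fun e => h2 (Eq.symm e))]⟩


/-!
Write `D(u) = P(u₋ ↔ w₋) - P(u₋ ↔ w₊)` (`connGap`). For a source `s` off `w`, let `C` be its
cluster: the vertices reached from `s` by open paths avoiding both copies of `w`. An open path
from `s` to `(w, b)` leaves `C` through an open edge `(u, c)(w, c)`, and either `c = b` or the path
goes on from `(w, !b)` to `(w, b)` outside `C`. The edges between `C` and `w` are independent of
`C` and of the open graph outside `C`; summing them out gives `P(s ↔ w₋) - P(s ↔ w₊) = 𝔼[gap(C)]`,
where `gap(C) = 1{w₊ ≁ w₋ outside C} (∏_{(x,+) ∈ C} (1 - p_{xw}) - ∏_{(x,-) ∈ C} (1 - p_{xw}))`; by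
the layer swap `2 D(u) = 𝔼[gap(C(u₋)) - gap(C(u₊))]`.

With `ℓ_x = -log (1 - p_{xw})` the two products are `e^{-L₊(C)}` and `e^{-L₋(C)}`, where `L_b(C)`
is the `ℓ`-mass of the layer-`b` part of `C`. Grouping `∑_u ℓ_u (gap(C(u₋)) - gap(C(u₊)))` by
clusters leaves terms `(L₋ - L₊) (e^{-L₊} - e^{-L₋}) ≥ 0`, so `∑_u ℓ_u D(u) ≥ 0`. The local
symmetry gives `D(u) = D(v)` whenever `p_{uw} > 0` and `p_u ≠ 1`; for the other `u`, `ℓ_u = 0` or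
`D(u) = 0`. Hence `D(v) ≥ 0`. If `p_v = 1` or `p_w = 1`, a vertical edge is almost surely open
and `D(v) = 0` directly.
-/

namespace Bunkbed

open SimpleGraph Function Real

variable {V : Type*}

abbrev Config (V : Type*) := Sym2 (V × Bool) → Bool

section Percolation

variable [Fintype V] [DecidableEq V]

variable (p : Sym2 (V × Bool) → ℝ)

noncomputable def expect (f : Config V → ℝ) : ℝ := ∑ ω, wt p ω * f ω

variable {p}

lemma expect_congr {f g : Config V → ℝ} (h : ∀ ω, f ω = g ω) : expect p f = expect p g :=
  congrArg _ (funext h)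

lemma expect_sub (f g : Config V → ℝ) :
    expect p f - expect p g = expect p fun ω => f ω - g ω := by
  simp only [expect, ← sum_sub_distrib, mul_sub]

lemma sum_mul_expect {ι : Type*} (s : Finset ι) (c : ι → ℝ) (f : ι → Config V → ℝ) :
    ∑ i ∈ s, c i * expect p (f i) = expect p fun ω => ∑ i ∈ s, c i * f i ω := by
  simp only [expect, mul_sum]
  rw [sum_comm]
  exact sum_congr rfl fun ω _ => sum_congr rfl fun i _ => by ring

lemma wt_nonneg (hp : ∀ e, p e ∈ Set.Icc (0 : ℝ) 1) (ω : Config V) : 0 ≤ wt p ω :=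
  prod_nonneg fun e _ => by split_ifs <;> linarith [(hp e).1, (hp e).2]

lemma expect_nonneg (hp : ∀ e, p e ∈ Set.Icc (0 : ℝ) 1) {f : Config V → ℝ} (hf : ∀ ω, 0 ≤ f ω) :
    0 ≤ expect p f :=
  sum_nonneg fun ω _ => mul_nonneg (wt_nonneg hp ω) (hf ω)

lemma eq_true_of_wt_ne_zero {ω : Config V} (hω : wt p ω ≠ 0) {e : Sym2 (V × Bool)}
    (he : p e = 1) : ω e = true := by
  by_contra h
  exact hω (prod_eq_zero (mem_univ e) (by simp [h, he]))

open Classical in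
lemma prob_eq_expect (A : Config V → Prop) : prob p A = expect p fun ω => if A ω then 1 else 0 :=
  sum_congr rfl fun ω _ => by by_cases h : A ω <;> simp [h]

open Classical in
lemma prob_congr_of_wt_ne_zero {A B : Config V → Prop} (h : ∀ ω, wt p ω ≠ 0 → (A ω ↔ B ω)) :
    prob p A = prob p B := by
  refine sum_congr rfl fun ω _ => ?_
  by_cases hω : wt p ω = 0
  · simp [hω]
  · exact if_congr (h ω hω) rfl rfl

lemma prob_comp {σ : Sym2 (V × Bool) → Sym2 (V × Bool)} (hσ : Bijective σ)
    (hp : ∀ e, p (σ e) = p e) (A : Config V → Prop) : prob p (fun ω => A (ω ∘ σ)) = prob p A := by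
  have hwt : ∀ ω : Config V, wt p (ω ∘ σ) = wt p ω := fun ω =>
    Fintype.prod_bijective σ hσ _ _ fun e => by simp [hp]
  exact Fintype.sum_bijective (· ∘ σ) ⟨hσ.2.injective_comp_right, hσ.1.surjective_comp_right⟩ _ _
    fun ω => by simp only [hwt]

lemma sum_add_sum_eq_sum_update {α M : Type*} [Fintype α] [DecidableEq α] [AddCommMonoid M]
    (e : α) (h : (α → Bool) → M) :
    ∑ ω, h ω + ∑ ω, h ω = ∑ ω, (h (update ω e true) + h (update ω e false)) := by
  have hinv : Involutive fun ω : α → Bool => update ω e (!ω e) := fun ω => by simp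
  calc ∑ ω, h ω + ∑ ω, h ω = ∑ ω, (h ω + h (hinv.toPerm _ ω)) := by
        rw [sum_add_distrib, Equiv.sum_comp]
    _ = _ := sum_congr rfl fun ω _ => by
        have hω : ∀ b, ω e = b → update ω e b = ω := fun b hb => hb ▸ update_eq_self e ω
        cases hb : ω e <;> simp [hb, hω _ hb, add_comm]

lemma wt_update (ω : Config V) (e : Sym2 (V × Bool)) (b : Bool) :
    wt p (update ω e b) =
      (if b then p e else 1 - p e) * ∏ e' ∈ univ.erase e, if ω e' then p e' else 1 - p e' := by
  rw [wt, ← mul_prod_erase univ _ (mem_univ e), update_self]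
  exact congrArg _ (prod_congr rfl fun e' he' => by rw [update_of_ne (ne_of_mem_erase he')])

lemma expect_eq_expect_update (e : Sym2 (V × Bool)) (f : Config V → ℝ) :
    expect p f =
      expect p fun ω => p e * f (update ω e true) + (1 - p e) * f (update ω e false) := by
  set r : Config V → ℝ := fun ω => ∏ e' ∈ univ.erase e, if ω e' then p e' else 1 - p e'
  set g : Config V → ℝ := fun ω => p e * f (update ω e true) + (1 - p e) * f (update ω e false)
  have key : ∀ h : Config V → ℝ, expect p h + expect p h =
      ∑ ω, r ω * (p e * h (update ω e true) + (1 - p e) * h (update ω e false)) := fun h => by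
    rw [expect, sum_add_sum_eq_sum_update e]
    exact sum_congr rfl fun ω _ => by simp only [wt_update, ↓reduceIte, Bool.false_eq_true]; ring
  have hg : ∀ ω c, g (update ω e c) = g ω := fun ω c => by simp only [g, update_idem]
  have : expect p g + expect p g = expect p f + expect p f := by
    rw [key, key]
    exact sum_congr rfl fun ω _ => by rw [hg, hg]; ring
  linarith

lemma expect_mul_ite_and (e : Sym2 (V × Bool)) {P : Config V → Prop} [DecidablePred P]
    (hP : ∀ ω b, P (update ω e b) ↔ P ω) {F : Config V → ℝ}
    (hF : ∀ ω, P ω → ∀ b, F (update ω e b) = F ω) :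
    (expect p fun ω => F ω * if P ω ∧ ω e = true then 0 else 1) =
      expect p fun ω => F ω * if P ω then 1 - p e else 1 := by
  rw [expect_eq_expect_update e, expect_eq_expect_update e (fun ω => F ω * if P ω then _ else _)]
  refine expect_congr fun ω => ?_
  by_cases h : P ω
  · simp only [hF ω h, hP, h, update_self, and_self, ↓reduceIte, and_false, Bool.false_eq_true]
    ring
  · simp [hP, h]

/-- On the event `P · i` nothing but the factor `i` looks at the edge `ed i`, so that factor
averages to the probability `1 - p (ed i)` that the edge is closed. -/
lemma expect_mul_prod_ite_and {ι : Type*} [DecidableEq ι] (ed : ι → Sym2 (V × Bool))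
    (s : Finset ι) (hed : Set.InjOn ed s) {P : Config V → ι → Prop} [∀ ω i, Decidable (P ω i)]
    (hP : ∀ ω, ∀ i ∈ s, ∀ b j, P (update ω (ed i) b) j ↔ P ω j) {G : Config V → ℝ}
    (hG : ∀ ω, ∀ i ∈ s, P ω i → ∀ b, G (update ω (ed i) b) = G ω) :
    (expect p fun ω => G ω * ∏ i ∈ s, if P ω i ∧ ω (ed i) = true then 0 else 1) =
      expect p fun ω => G ω * ∏ i ∈ s, if P ω i then 1 - p (ed i) else 1 := by
  induction s using Finset.induction_on generalizing G with
  | empty => rfl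
  | @insert i₀ s hi₀ ih =>
    have hne : ∀ i ∈ s, ed i ≠ ed i₀ := fun i hi h =>
      hi₀ (hed (mem_insert_of_mem hi) (mem_insert_self i₀ s) h ▸ hi)
    calc (expect p fun ω => G ω * ∏ i ∈ insert i₀ s, if P ω i ∧ ω (ed i) = true then 0 else 1)
        = expect p fun ω => (G ω * ∏ i ∈ s, if P ω i ∧ ω (ed i) = true then 0 else 1) *
            if P ω i₀ ∧ ω (ed i₀) = true then 0 else 1 :=
          expect_congr fun ω => by rw [prod_insert hi₀]; ring
      _ = expect p fun ω => (G ω * ∏ i ∈ s, if P ω i ∧ ω (ed i) = true then 0 else 1) *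
            if P ω i₀ then 1 - p (ed i₀) else 1 := by
          refine expect_mul_ite_and _ (fun ω b => hP ω i₀ (mem_insert_self _ _) b i₀)
            fun ω h b => ?_
          rw [hG ω i₀ (mem_insert_self _ _) h b]
          refine congrArg _ (prod_congr rfl fun i hi => ?_)
          simp only [hP ω i₀ (mem_insert_self _ _) b i, update_of_ne (hne i hi)]
      _ = expect p fun ω => (G ω * if P ω i₀ then 1 - p (ed i₀) else 1) *
            ∏ i ∈ s, if P ω i ∧ ω (ed i) = true then 0 else 1 := expect_congr fun ω => by ring
      _ = expect p fun ω => (G ω * if P ω i₀ then 1 - p (ed i₀) else 1) *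
            ∏ i ∈ s, if P ω i then 1 - p (ed i) else 1 := by
          refine ih (hed.mono (by simp)) (fun ω i hi => hP ω i (mem_insert_of_mem hi))
            fun ω i hi h b => ?_
          simp only [hG ω i (mem_insert_of_mem hi) h b, hP ω i (mem_insert_of_mem hi) b i₀]
      _ = _ := expect_congr fun ω => by rw [prod_insert hi₀]; ring

end Percolation

section BunkbedIso

variable {G : SimpleGraph V}

def openSubIso (ξ : bunkbed G ≃g bunkbed G) (ω : Config V) :
    openSub G (ω ∘ Sym2.map ξ) ≃g openSub G ω where
  toEquiv := ξ.toEquiv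
  map_rel_iff' := and_congr ξ.map_adj_iff Iff.rfl

variable (G) in
def layerSwap : bunkbed G ≃g bunkbed G where
  toEquiv := (Equiv.refl V).prodCongr Equiv.boolNot
  map_rel_iff' := by
    rintro ⟨x, a⟩ ⟨y, b⟩
    simp [bunkbed]

@[simp] lemma layerSwap_apply (x : V × Bool) : layerSwap G x = (x.1, !x.2) := rfl

def bunkbedLift (φ : G ≃g G) : bunkbed G ≃g bunkbed G where
  toEquiv := φ.toEquiv.prodCongr (Equiv.refl Bool)
  map_rel_iff' := by
    rintro ⟨x, a⟩ ⟨y, b⟩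
    simp [bunkbed, φ.map_adj_iff]

@[simp] lemma bunkbedLift_apply (φ : G ≃g G) (x : V × Bool) : bunkbedLift φ x = (φ x.1, x.2) :=
  rfl

end BunkbedIso

section EdgeProb

variable [DecidableEq V] (pE : Sym2 V → ℝ) (pV : V → ℝ)

lemma edgeProb_mk (x y : V × Bool) :
    edgeProb pE pV s(x, y) =
      if x.1 = y.1 then pV x.1 else if x.2 = y.2 then pE s(x.1, y.1) else 0 :=
  rfl

lemma edgeProb_vertical (x : V) : edgeProb pE pV s((x, false), (x, true)) = pV x := by
  simp [edgeProb_mk]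

lemma edgeProb_horizontal {x w : V} (hx : x ≠ w) (b : Bool) :
    edgeProb pE pV s((x, b), (w, b)) = pE s(x, w) := by
  simp [edgeProb_mk, hx]

lemma edgeProb_mem (hE : ∀ e, pE e ∈ Set.Ico (0 : ℝ) 1) (hV : ∀ u, pV u ∈ Set.Icc (0 : ℝ) 1)
    (e : Sym2 (V × Bool)) : edgeProb pE pV e ∈ Set.Icc (0 : ℝ) 1 := by
  induction e using Sym2.ind with
  | _ x y =>
    rw [edgeProb_mk]
    split_ifs
    exacts [hV _, Set.Ico_subset_Icc_self (hE _), ⟨le_rfl, zero_le_one⟩]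

lemma edgeProb_map_layerSwap {G : SimpleGraph V} (e : Sym2 (V × Bool)) :
    edgeProb pE pV (Sym2.map (layerSwap G) e) = edgeProb pE pV e := by
  induction e using Sym2.ind with
  | _ x y => simp [edgeProb_mk]

lemma edgeProb_map_bunkbedLift (φ : V ≃ V) (hφE : ∀ x y : V, pE s(φ x, φ y) = pE s(x, y))
    (hφV : ∀ x : V, pV (φ x) = pV x) (e : Sym2 (V × Bool)) :
    edgeProb pE pV (Sym2.map (bunkbedLift (Iso.completeGraph φ)) e) = edgeProb pE pV e := by
  induction e using Sym2.ind with
  | _ x y =>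
    simp only [Sym2.map_mk, bunkbedLift_apply, edgeProb_mk]
    exact if_congr (Iso.completeGraph φ).injective.eq_iff (hφV _)
      (if_congr Iff.rfl (hφE _ _) rfl)

end EdgeProb

section Symmetry

variable [Fintype V] [DecidableEq V] {G : SimpleGraph V}

lemma prob_conn_map (p : Sym2 (V × Bool) → ℝ) (ξ : bunkbed G ≃g bunkbed G)
    (hp : ∀ e, p (Sym2.map ξ e) = p e) (x y : V × Bool) :
    prob p (fun ω => Conn G ω (ξ x) (ξ y)) = prob p (fun ω => Conn G ω x y) := by
  have hσ : Bijective (Sym2.map ξ) :=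
    Finite.injective_iff_bijective.1 (Sym2.map.injective ξ.injective)
  calc prob p (fun ω => Conn G ω (ξ x) (ξ y))
      = prob p (fun ω => Conn G (ω ∘ Sym2.map ξ) x y) := by
        simp only [Conn, ← (openSubIso ξ _).reachable_iff]
        rfl
    _ = _ := prob_comp hσ hp (fun ω => Conn G ω x y)

lemma prob_conn_comm (p : Sym2 (V × Bool) → ℝ) (x y : V × Bool) :
    prob p (fun ω => Conn G ω x y) = prob p (fun ω => Conn G ω y x) := by
  simp only [Conn, reachable_comm]

lemma prob_conn_vertical (p : Sym2 (V × Bool) → ℝ) {x : V} (hx : p s((x, false), (x, true)) = 1)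
    (s : V × Bool) :
    prob p (fun ω => Conn G ω s (x, false)) = prob p (fun ω => Conn G ω s (x, true)) := by
  refine prob_congr_of_wt_ne_zero fun ω hω => ?_
  have hadj : (openSub G ω).Adj (x, false) (x, true) :=
    ⟨Or.inr ⟨rfl, Bool.false_ne_true⟩, eq_true_of_wt_ne_zero hω hx⟩
  exact ⟨fun h => h.trans hadj.reachable, fun h => h.trans hadj.symm.reachable⟩

variable (G) in
noncomputable def connGap (p : Sym2 (V × Bool) → ℝ) (v w : V) : ℝ :=
  prob p (fun ω => Conn G ω (v, false) (w, false)) - prob p (fun ω => Conn G ω (v, false) (w, true))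

variable {p : Sym2 (V × Bool) → ℝ}

lemma connGap_eq_zero_of_left (hp : ∀ e, p (Sym2.map (layerSwap G) e) = p e) {u : V}
    (hu : p s((u, false), (u, true)) = 1) (w : V) : connGap G p u w = 0 := by
  rw [connGap, sub_eq_zero, prob_conn_comm, prob_conn_vertical p hu, prob_conn_comm,
    ← prob_conn_map p (layerSwap G) hp (u, false) (w, true)]
  simp

lemma connGap_eq_zero_of_right {w : V} (hw : p s((w, false), (w, true)) = 1) (v : V) :
    connGap G p v w = 0 :=
  sub_eq_zero.2 (prob_conn_vertical p hw _)

lemma connGap_eq_of_pair_eq (hp : ∀ e, p (Sym2.map (layerSwap G) e) = p e) (φ : G ≃g G)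
    (hφ : ∀ e, p (Sym2.map (bunkbedLift φ) e) = p e) {u v w : V}
    (huvw : ({φ v, φ w} : Set V) = {u, w}) : connGap G p u w = connGap G p v w := by
  have hlift := prob_conn_map p (bunkbedLift φ) hφ
  rcases Set.pair_eq_pair_iff.1 huvw with ⟨hv, hw⟩ | ⟨hv, hw⟩
  · simp only [connGap, ← hlift (v, _) (w, _), bunkbedLift_apply, hv, hw]
  · simp only [connGap, ← hlift (v, _) (w, _), bunkbedLift_apply, hv, hw]
    rw [prob_conn_comm p (w, false), prob_conn_comm p (w, false),
      ← prob_conn_map p (layerSwap G) hp (u, false) (w, true)]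
    simp

end Symmetry

section Cluster

variable (w : V) (ω : Config V)

def avoidGraph : SimpleGraph (V × Bool) where
  Adj x y := (openSub ⊤ ω).Adj x y ∧ x.1 ≠ w ∧ y.1 ≠ w
  symm := ⟨by rintro x y ⟨h, hx, hy⟩; exact ⟨h.symm, hy, hx⟩⟩
  loopless := ⟨fun x h => (openSub ⊤ ω).irrefl h.1⟩

def cluster (s : V × Bool) : Set (V × Bool) := {x | (avoidGraph w ω).Reachable s x}

def outsideGraph (K : Set (V × Bool)) : SimpleGraph (V × Bool) where
  Adj x y := (openSub ⊤ ω).Adj x y ∧ x ∉ K ∧ y ∉ K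
  symm := ⟨by rintro x y ⟨h, hx, hy⟩; exact ⟨h.symm, hy, hx⟩⟩
  loopless := ⟨fun x h => (openSub ⊤ ω).irrefl h.1⟩

def Separated (K : Set (V × Bool)) : Prop := ¬(outsideGraph ω K).Reachable (w, true) (w, false)

def Hits (K : Set (V × Bool)) (b : Bool) : Prop :=
  ∃ u ≠ w, (u, b) ∈ K ∧ ω s((u, b), (w, b)) = true

variable {w ω}

lemma mem_cluster_self (s : V × Bool) : s ∈ cluster w ω s := Reachable.refl s

lemma fst_ne_of_mem_cluster {s x : V × Bool} (hs : s.1 ≠ w) (hx : x ∈ cluster w ω s) :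
    x.1 ≠ w := by
  obtain ⟨W⟩ := hx
  induction W with
  | nil => exact hs
  | cons h _ ih => exact ih h.2.2

lemma mem_cluster_of_adj {s x y : V × Bool} (hx : x ∈ cluster w ω s) (hxy : (openSub ⊤ ω).Adj x y)
    (hx1 : x.1 ≠ w) (hy1 : y.1 ≠ w) : y ∈ cluster w ω s :=
  hx.trans (Adj.reachable ⟨hxy, hx1, hy1⟩)

lemma avoidGraph_le : avoidGraph w ω ≤ openSub ⊤ ω := fun _ _ h => h.1

lemma outsideGraph_le (K : Set (V × Bool)) : outsideGraph ω K ≤ openSub ⊤ ω := fun _ _ h => h.1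

lemma conn_of_mem_cluster {s x : V × Bool} (hx : x ∈ cluster w ω s) : Conn ⊤ ω s x :=
  hx.mono avoidGraph_le

lemma cluster_eq_cluster_iff {s t : V × Bool} : cluster w ω t = cluster w ω s ↔ t ∈ cluster w ω s :=
  ⟨fun h => h ▸ mem_cluster_self t, fun h => Set.ext fun _ => ⟨h.trans, h.symm.trans⟩⟩

lemma conn_of_hits {s : V × Bool} {b : Bool} (h : Hits w ω (cluster w ω s) b) :
    Conn ⊤ ω s (w, b) := by
  obtain ⟨u, hu, hK, he⟩ := h
  exact (conn_of_mem_cluster hK).trans (Adj.reachable ⟨Or.inl ⟨rfl, hu⟩, he⟩)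

lemma hits_or_reachable_outside {s : V × Bool} (hs : s.1 ≠ w) {x t : V × Bool} (ht : t.1 = w)
    (W : (openSub ⊤ ω).Walk x t) :
    (Hits w ω (cluster w ω s) t.2 ∨ (Hits w ω (cluster w ω s) (!t.2) ∧
        (outsideGraph ω (cluster w ω s)).Reachable (w, !t.2) t)) ∨
      (x ∉ cluster w ω s ∧ (outsideGraph ω (cluster w ω s)).Reachable x t) := by
  induction W with
  | nil => exact Or.inr ⟨fun hx => fst_ne_of_mem_cluster hs hx ht, Reachable.refl _⟩
  | @cons x y t hxy W ih =>
    obtain h | ⟨hy, hyt⟩ := ih ht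
    · exact Or.inl h
    by_cases hx : x ∈ cluster w ω s
    swap
    · have hadj : (outsideGraph ω (cluster w ω s)).Adj x y := ⟨hxy, hx, hy⟩
      exact Or.inr ⟨hx, hadj.reachable.trans hyt⟩
    have hx1 : x.1 ≠ w := fst_ne_of_mem_cluster hs hx
    have hy1 : y.1 = w := by_contra fun hy1 => hy (mem_cluster_of_adj hx hxy hx1 hy1)
    have hyx : y = (w, x.2) := by
      obtain ⟨h2, -⟩ | ⟨h1, -⟩ := hxy.1
      · exact Prod.ext hy1 h2.symm
      · exact absurd (h1.trans hy1) hx1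
    have hhits : Hits w ω (cluster w ω s) x.2 := ⟨x.1, hx1, hx, by simpa [← hyx] using hxy.2⟩
    obtain hb | hb := Bool.eq_or_eq_not x.2 t.2
    · exact Or.inl (Or.inl (hb ▸ hhits))
    · rw [hyx, hb] at hyt
      exact Or.inl (Or.inr ⟨hb ▸ hhits, hyt⟩)

lemma conn_iff_hits {s : V × Bool} (hs : s.1 ≠ w) (b : Bool) :
    Conn ⊤ ω s (w, b) ↔ Hits w ω (cluster w ω s) b ∨ (Hits w ω (cluster w ω s) (!b) ∧
      (outsideGraph ω (cluster w ω s)).Reachable (w, !b) (w, b)) := by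
  refine ⟨fun ⟨W⟩ => ?_, ?_⟩
  · obtain h | ⟨hs', -⟩ := hits_or_reachable_outside hs rfl W
    · exact h
    · exact absurd (mem_cluster_self s) hs'
  · rintro (h | ⟨h, hout⟩)
    · exact conn_of_hits h
    · exact (conn_of_hits h).trans (hout.mono (outsideGraph_le _))

open Classical in
lemma ite_conn_sub_ite_conn {s : V × Bool} (hs : s.1 ≠ w) :
    ((if Conn ⊤ ω s (w, false) then 1 else 0) - if Conn ⊤ ω s (w, true) then 1 else 0 : ℝ) =
      (if Separated w ω (cluster w ω s) then 1 else 0) *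
        ((if Hits w ω (cluster w ω s) true then 0 else 1) -
          if Hits w ω (cluster w ω s) false then 0 else 1) := by
  simp only [conn_iff_hits hs, Separated, Bool.not_false, Bool.not_true,
    reachable_comm (u := ((w, false) : V × Bool))]
  by_cases h₁ : Hits w ω (cluster w ω s) true <;> by_cases h₂ : Hits w ω (cluster w ω s) false <;>
    by_cases h₃ : (outsideGraph ω (cluster w ω s)).Reachable (w, true) (w, false) <;>
    simp [h₁, h₂, h₃]

variable [DecidableEq V]

lemma avoidGraph_update {e : Sym2 (V × Bool)} {c : Bool} (he : (w, c) ∈ e) (b : Bool) :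
    avoidGraph w (update ω e b) = avoidGraph w ω := by
  ext x y
  refine and_congr_left fun hxy => ?_
  have hne : s(x, y) ≠ e := by
    rintro rfl
    rcases Sym2.mem_iff.1 he with h | h
    exacts [hxy.1 (by rw [← h]), hxy.2 (by rw [← h])]
  simp only [openSub, update_of_ne hne]

lemma outsideGraph_update {K : Set (V × Bool)} {e : Sym2 (V × Bool)} {k : V × Bool} (hk : k ∈ K)
    (hke : k ∈ e) (b : Bool) : outsideGraph (update ω e b) K = outsideGraph ω K := by
  ext x y
  refine and_congr_left fun hxy => ?_
  have hne : s(x, y) ≠ e := by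
    rintro rfl
    rcases Sym2.mem_iff.1 hke with rfl | rfl
    exacts [hxy.1 hk, hxy.2 hk]
  simp only [openSub, update_of_ne hne]

lemma separated_update {K : Set (V × Bool)} {e : Sym2 (V × Bool)} {k : V × Bool} (hk : k ∈ K)
    (hke : k ∈ e) (b : Bool) : Separated w (update ω e b) K ↔ Separated w ω K := by
  rw [Separated, Separated, outsideGraph_update hk hke]

variable [Fintype V]

variable (w) in
open Classical in
noncomputable def weight (q : V → ℝ) (K : Set (V × Bool)) (b : Bool) : ℝ :=
  ∏ x ∈ univ.erase w, if (x, b) ∈ K then q x else 1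

variable (w ω) in
open Classical in
noncomputable def gap (q : V → ℝ) (K : Set (V × Bool)) : ℝ :=
  if Separated w ω K then weight w q K true - weight w q K false else 0

open Classical in
lemma ite_hits_eq_prod (K : Set (V × Bool)) (b : Bool) :
    (if Hits w ω K b then 0 else 1 : ℝ) =
      ∏ u ∈ univ.erase w, if (u, b) ∈ K ∧ ω s((u, b), (w, b)) = true then 0 else 1 := by
  split_ifs with h
  · obtain ⟨u, hu, hK, he⟩ := h
    rw [eq_comm]
    exact prod_eq_zero (mem_erase.2 ⟨hu, mem_univ u⟩) (if_pos ⟨hK, he⟩)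
  · exact (prod_eq_one fun u hu => if_neg fun h' => h ⟨u, ne_of_mem_erase hu, h'⟩).symm

open Classical in
lemma expect_separated_mul_not_hits (p : Sym2 (V × Bool) → ℝ) {q : V → ℝ}
    (hq : ∀ x ≠ w, ∀ b, p s((x, b), (w, b)) = 1 - q x) (s : V × Bool) (b : Bool) :
    (expect p fun ω => (if Separated w ω (cluster w ω s) then 1 else 0) *
        if Hits w ω (cluster w ω s) b then 0 else 1) =
      expect p fun ω => (if Separated w ω (cluster w ω s) then 1 else 0) *
        weight w q (cluster w ω s) b := by
  have hwe : ∀ u, (w, b) ∈ s((u, b), (w, b)) := fun u => Sym2.mem_mk_right _ _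
  have hcl : ∀ ω u c, cluster w (update ω s((u, b), (w, b)) c) s = cluster w ω s :=
    fun ω u c => by simp only [cluster, avoidGraph_update (hwe u) c]
  calc _ = expect p fun ω => (if Separated w ω (cluster w ω s) then 1 else 0) *
        ∏ u ∈ univ.erase w, if (u, b) ∈ cluster w ω s ∧ ω s((u, b), (w, b)) = true then 0 else 1 :=
        expect_congr fun ω => by rw [ite_hits_eq_prod]
    _ = expect p fun ω => (if Separated w ω (cluster w ω s) then 1 else 0) *
        ∏ u ∈ univ.erase w, if (u, b) ∈ cluster w ω s then 1 - p s((u, b), (w, b)) else 1 := by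
      refine expect_mul_prod_ite_and (fun u => s((u, b), (w, b))) _ ?_ (fun ω u _ c x => ?_)
        fun ω u _ hu c => ?_
      · intro u hu u' _ h
        simpa [ne_of_mem_erase (mem_coe.1 hu)] using h
      · simp only [hcl]
      · simp only [hcl, separated_update hu (Sym2.mem_mk_left _ _)]
    _ = _ := expect_congr fun ω => by
      unfold weight
      exact congrArg _ <| prod_congr rfl fun u hu => by
        rw [hq u (ne_of_mem_erase hu), sub_sub_cancel]

lemma prob_conn_sub_prob_conn_eq_expect_gap (p : Sym2 (V × Bool) → ℝ) {q : V → ℝ}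
    (hq : ∀ x ≠ w, ∀ b, p s((x, b), (w, b)) = 1 - q x) {s : V × Bool} (hs : s.1 ≠ w) :
    prob p (fun ω => Conn ⊤ ω s (w, false)) - prob p (fun ω => Conn ⊤ ω s (w, true)) =
      expect p fun ω => gap w ω q (cluster w ω s) := by
  rw [prob_eq_expect, prob_eq_expect, expect_sub, expect_congr fun ω => ite_conn_sub_ite_conn hs,
    expect_congr fun ω => mul_sub _ _ _, ← expect_sub, expect_separated_mul_not_hits p hq s,
    expect_separated_mul_not_hits p hq s, expect_sub]
  refine expect_congr fun ω => ?_
  rw [gap]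
  split_ifs <;> ring

end Cluster

lemma sum_mul_comp_nonneg_of_fiberwise {ι κ R : Type*} [DecidableEq κ]
    [NonUnitalNonAssocSemiring R] [PartialOrder R] [IsOrderedAddMonoid R] (s : Finset ι)
    (g : ι → κ) (μ : ι → R) (h : κ → R)
    (hfib : ∀ i ∈ s, 0 ≤ (∑ j ∈ s with g j = g i, μ j) * h (g i)) :
    0 ≤ ∑ i ∈ s, μ i * h (g i) := by
  rw [← sum_fiberwise_of_maps_to fun i hi => mem_image_of_mem g hi]
  refine sum_nonneg fun k hk => ?_
  obtain ⟨i, hi, rfl⟩ := mem_image.1 hk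
  calc 0 ≤ (∑ j ∈ s with g j = g i, μ j) * h (g i) := hfib i hi
    _ = _ := by
      rw [sum_mul]
      exact sum_congr rfl fun j hj => by rw [(mem_filter.1 hj).2]

lemma sub_mul_exp_neg_sub_exp_neg_nonneg (a b : ℝ) : 0 ≤ (a - b) * (exp (-b) - exp (-a)) := by
  rcases le_total a b with h | h
  · exact mul_nonneg_of_nonpos_of_nonpos (by linarith) (by simpa using exp_le_exp.2 (neg_le_neg h))
  · exact mul_nonneg (by linarith) (by simpa using exp_le_exp.2 (neg_le_neg h))

section Inequality

variable [Fintype V] [DecidableEq V] {w : V}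

open Classical in
lemma weight_exp_neg (ℓ : V → ℝ) (K : Set (V × Bool)) (b : Bool) :
    weight w (fun x => exp (-ℓ x)) K b =
      exp (-∑ x ∈ univ.erase w, if (x, b) ∈ K then ℓ x else 0) := by
  rw [weight, ← sum_neg_distrib, exp_sum]
  exact prod_congr rfl fun x _ => by split_ifs <;> simp

lemma sum_mul_gap_sub_gap_nonneg (ℓ : V → ℝ) (ω : Config V) :
    0 ≤ ∑ u ∈ univ.erase w, ℓ u * (gap w ω (fun x => exp (-ℓ x)) (cluster w ω (u, false)) -
      gap w ω (fun x => exp (-ℓ x)) (cluster w ω (u, true))) := by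
  classical
  set T := (univ.erase w) ×ˢ (univ : Finset Bool)
  set μ : V × Bool → ℝ := fun t => if t.2 then -ℓ t.1 else ℓ t.1
  have hT : ∑ u ∈ univ.erase w, ℓ u * (gap w ω (fun x => exp (-ℓ x)) (cluster w ω (u, false)) -
      gap w ω (fun x => exp (-ℓ x)) (cluster w ω (u, true))) =
      ∑ t ∈ T, μ t * gap w ω (fun x => exp (-ℓ x)) (cluster w ω t) := by
    rw [sum_product]
    exact sum_congr rfl fun u _ => by
      simp only [Fintype.sum_bool, μ, ↓reduceIte, Bool.false_eq_true]
      ring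
  rw [hT]
  refine sum_mul_comp_nonneg_of_fiberwise T (cluster w ω) μ _ fun t _ => ?_
  set K := cluster w ω t
  have hmass : ∑ j ∈ T with cluster w ω j = K, μ j =
      (∑ x ∈ univ.erase w, if (x, false) ∈ K then ℓ x else 0) -
        ∑ x ∈ univ.erase w, if (x, true) ∈ K then ℓ x else 0 := by
    simp only [K, cluster_eq_cluster_iff]
    rw [sum_filter, sum_product, ← sum_sub_distrib]
    exact sum_congr rfl fun x _ => by
      simp only [Fintype.sum_bool, μ, ↓reduceIte, Bool.false_eq_true]
      split_ifs <;> ring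
  rw [hmass, gap, weight_exp_neg, weight_exp_neg]
  split_ifs
  · exact sub_mul_exp_neg_sub_exp_neg_nonneg _ _
  · rw [mul_zero]

end Inequality

section Assembly

variable [Fintype V] [DecidableEq V] (pE : Sym2 V → ℝ) (pV : V → ℝ)

lemma two_mul_connGap_eq_expect {w a : V} (ha : a ≠ w) {q : V → ℝ}
    (hq : ∀ x ≠ w, pE s(x, w) = 1 - q x) :
    2 * connGap ⊤ (edgeProb pE pV) a w = expect (edgeProb pE pV) fun ω =>
      gap w ω q (cluster w ω (a, false)) - gap w ω q (cluster w ω (a, true)) := by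
  have hq' : ∀ x ≠ w, ∀ b, edgeProb pE pV s((x, b), (w, b)) = 1 - q x := fun x hx b => by
    rw [edgeProb_horizontal pE pV hx, hq x hx]
  have hswap := prob_conn_map (edgeProb pE pV) (layerSwap ⊤) (edgeProb_map_layerSwap pE pV)
  have hff := hswap (a, false) (w, false)
  have hft := hswap (a, false) (w, true)
  simp only [layerSwap_apply, Bool.not_false, Bool.not_true] at hff hft
  rw [← expect_sub, ← prob_conn_sub_prob_conn_eq_expect_gap _ hq' (s := (a, false)) ha,
    ← prob_conn_sub_prob_conn_eq_expect_gap _ hq' (s := (a, true)) ha, connGap]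
  linarith

lemma sum_neg_log_mul_connGap_nonneg (hE : ∀ e, pE e ∈ Set.Ico (0 : ℝ) 1)
    (hV : ∀ u, pV u ∈ Set.Icc (0 : ℝ) 1) (w : V) :
    0 ≤ ∑ u ∈ univ.erase w, -log (1 - pE s(u, w)) * connGap ⊤ (edgeProb pE pV) u w := by
  set ℓ : V → ℝ := fun u => -log (1 - pE s(u, w))
  have hq : ∀ x ≠ w, pE s(x, w) = 1 - exp (-ℓ x) := fun x _ => by
    simp [ℓ, exp_log (sub_pos.2 (hE s(x, w)).2)]
  have h2 : 0 ≤ ∑ u ∈ univ.erase w, ℓ u * (2 * connGap ⊤ (edgeProb pE pV) u w) := by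
    rw [sum_congr rfl fun u hu => by rw [two_mul_connGap_eq_expect pE pV (ne_of_mem_erase hu) hq],
      sum_mul_expect]
    exact expect_nonneg (edgeProb_mem pE pV hE hV) fun ω => sum_mul_gap_sub_gap_nonneg ℓ ω
  simp only [mul_left_comm _ (2 : ℝ), ← mul_sum] at h2
  linarith

lemma connGap_nonneg_of_connGap_eq (hE : ∀ e, pE e ∈ Set.Ico (0 : ℝ) 1)
    (hV : ∀ u, pV u ∈ Set.Icc (0 : ℝ) 1) {v w : V} (hvw : v ≠ w) (hpos : 0 < pE s(v, w))
    (hv : pV v ≠ 1) (hsym : ∀ u ≠ w, 0 < pE s(u, w) → pV u ≠ 1 →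
      connGap ⊤ (edgeProb pE pV) u w = connGap ⊤ (edgeProb pE pV) v w) :
    0 ≤ connGap ⊤ (edgeProb pE pV) v w := by
  set c : V → ℝ := fun u => if pV u = 1 then 0 else -log (1 - pE s(u, w))
  have hterm : ∀ u ∈ univ.erase w, -log (1 - pE s(u, w)) * connGap ⊤ (edgeProb pE pV) u w =
      c u * connGap ⊤ (edgeProb pE pV) v w := fun u hu => by
    by_cases hu1 : pV u = 1
    · simp [c, hu1, connGap_eq_zero_of_left (edgeProb_map_layerSwap pE pV)
        ((edgeProb_vertical pE pV u).trans hu1)]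
    rcases (hE s(u, w)).1.eq_or_lt with h0 | h0
    · simp [c, hu1, ← h0]
    · simp [c, hu1, hsym u (ne_of_mem_erase hu) h0 hu1]
  have hc : 0 < ∑ u ∈ univ.erase w, c u := by
    refine sum_pos' (fun u _ => ?_) ⟨v, mem_erase.2 ⟨hvw, mem_univ v⟩, ?_⟩
    · by_cases hu1 : pV u = 1
      · simp [c, hu1]
      · simpa [c, hu1] using
          log_nonpos (sub_nonneg.2 (hE s(u, w)).2.le) (by linarith [(hE s(u, w)).1])
    · simpa [c, hv] using log_neg (sub_pos.2 (hE s(v, w)).2) (by linarith)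
  have h := sum_neg_log_mul_connGap_nonneg pE pV hE hV w
  rw [sum_congr rfl hterm, ← sum_mul] at h
  exact nonneg_of_mul_nonneg_right h hc

end Assembly

end Bunkbed

open Bunkbed

/-- Theorem 1: bunkbed inequality for neighboring vertices with a
local symmetry in a weighted complete graph. -/
theorem bunkbed_neighbors_local_symmetry {V : Type*} [Fintype V] [DecidableEq V]
    (pE : Sym2 V → ℝ) (pV : V → ℝ)
    (hE : ∀ e, pE e ∈ Set.Ico (0:ℝ) 1) (hV : ∀ u, pV u ∈ Set.Icc (0:ℝ) 1)
    (v w : V) (hvw : v ≠ w) (hpos : 0 < pE s(v, w))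
    (hsym : pV v = 1 ∨ pV w = 1 ∨
      ∀ u : V, u ≠ w → 0 < pE s(u, w) → pV u ≠ 1 →
        ∃ φ : V ≃ V, (∀ x y : V, pE s(φ x, φ y) = pE s(x, y)) ∧
          (∀ x : V, pV (φ x) = pV x) ∧ ({φ v, φ w} : Set V) = {u, w}) :
    prob (edgeProb pE pV) (fun ω => Conn (⊤ : SimpleGraph V) ω (v, false) (w, false)) ≥
      prob (edgeProb pE pV) (fun ω => Conn (⊤ : SimpleGraph V) ω (v, false) (w, true)) := by
  have hswap := edgeProb_map_layerSwap pE pV (G := ⊤)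
  rw [ge_iff_le, ← sub_nonneg]
  change 0 ≤ connGap ⊤ (edgeProb pE pV) v w
  obtain hv | hv := eq_or_ne (pV v) 1
  · exact (connGap_eq_zero_of_left hswap ((edgeProb_vertical pE pV v).trans hv) w).ge
  obtain hv' | hw | hsym := hsym
  · exact absurd hv' hv
  · exact (connGap_eq_zero_of_right ((edgeProb_vertical pE pV w).trans hw) v).ge
  refine connGap_nonneg_of_connGap_eq pE pV hE hV hvw hpos hv fun u hu hpu hu1 => ?_
  obtain ⟨φ, hφE, hφV, hφ⟩ := hsym u hu hpu hu1
  exact connGap_eq_of_pair_eq hswap (SimpleGraph.Iso.completeGraph φ)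
    (edgeProb_map_bunkbedLift pE pV φ hφE hφV) hφ
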